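/- arXiv:1506.03885 — 5 statements merged into one kernel-verified Lean document; each statement's English description precedes it below -/
import Mathlib

section
/- The limsup aggregation function is submixing: for every shuffle α of two sequences β and γ, min(limsup β, limsup γ) ≤ limsup α ≤ max(limsup β, limsup γ). -/
/-! Write `u t = α t`. Then `β = u ∘ e` and `γ = u ∘ g` are subsequences of `u`, whose limsups are at
most that of `u`. Conversely, since the ranges of `e` and `g` cover `ℕ`, the filter `atTop` is below
`map e atTop ⊔ map g atTop`, and the limsup along a supremum of filters is the maximum of the
limsups. -/

/-- `α` is a shuffle of `β` and `γ`: ℕ is partitioned into two infinite sets,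
given by the ranges of the strictly monotone enumerations `e` and `g`, and
`α` restricted to these sets (in order) equals `β` and `γ` respectively. -/
def IsShuffle {X : Type*} (α β γ : ℕ → X) : Prop :=
  ∃ e g : ℕ → ℕ, StrictMono e ∧ StrictMono g ∧
    (∀ n, (∃ k, e k = n) ∨ (∃ k, g k = n)) ∧
    (∀ k l, e k ≠ g l) ∧
    (∀ k, α (e k) = β k) ∧ (∀ k, α (g k) = γ k)

open Filter

theorem StrictMono.atTop_le_map_atTop_sup_map_atTop {ι κ α : Type*} [LinearOrder ι] [Nonempty ι]
    [LinearOrder κ] [Nonempty κ] [SemilatticeSup α] {e : ι → α} {g : κ → α}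
    (he : StrictMono e) (hg : StrictMono g) (hcover : ∀ n, n ∈ Set.range e ∨ n ∈ Set.range g) :
    atTop ≤ map e atTop ⊔ map g atTop := by
  rintro s ⟨hs_e, hs_g⟩
  obtain ⟨K, hK⟩ := mem_atTop_sets.mp (mem_map.mp hs_e)
  obtain ⟨L, hL⟩ := mem_atTop_sets.mp (mem_map.mp hs_g)
  refine mem_of_superset (mem_atTop (e K ⊔ g L)) fun n hn => ?_
  rcases hcover n with ⟨k, rfl⟩ | ⟨k, rfl⟩
  · exact hK k (he.le_iff_le.mp (le_sup_left.trans hn))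
  · exact hL k (hg.le_iff_le.mp (le_sup_right.trans hn))

/-- The limsup aggregation function is submixing. -/
theorem limsup_submixing (α β γ : ℕ → ℤ) (h : IsShuffle α β γ) :
    min (Filter.limsup (fun t => ((β t : ℝ) : EReal)) Filter.atTop)
        (Filter.limsup (fun t => ((γ t : ℝ) : EReal)) Filter.atTop) ≤
      Filter.limsup (fun t => ((α t : ℝ) : EReal)) Filter.atTop ∧
    Filter.limsup (fun t => ((α t : ℝ) : EReal)) Filter.atTop ≤
      max (Filter.limsup (fun t => ((β t : ℝ) : EReal)) Filter.atTop)
          (Filter.limsup (fun t => ((γ t : ℝ) : EReal)) Filter.atTop) := by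
  obtain ⟨e, g, he, hg, hcover, -, hβ, hγ⟩ := h
  set u : ℕ → EReal := fun t => ((α t : ℝ) : EReal)
  have hβu : (fun t => ((β t : ℝ) : EReal)) = u ∘ e := by ext k; simp [u, hβ]
  have hγu : (fun t => ((γ t : ℝ) : EReal)) = u ∘ g := by ext k; simp [u, hγ]
  rw [hβu, hγu]
  refine ⟨min_le_left _ _ |>.trans he.tendsto_atTop.limsup_comp_le_limsup, ?_⟩
  calc limsup u atTop
      ≤ limsup u (map e atTop ⊔ map g atTop) :=
        limsup_le_limsup_of_le (he.atTop_le_map_atTop_sup_map_atTop hg hcover)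
    _ = max (limsup (u ∘ e) atTop) (limsup (u ∘ g) atTop) := limsup_sup_filter
end

section
/- The parity aggregation function is submixing: if α is a shuffle of two priority sequences β and γ, then min(parity β, parity γ) ≤ parity α ≤ max(parity β, parity γ). -/
/-- Parity aggregation: `1` if the least priority occurring infinitely often
is even, `0` otherwise. -/
noncomputable def parity {n : ℕ} (α : ℕ → Fin n) : ℕ :=
  if Even (sInf {k : ℕ | {t | (α t : ℕ) = k}.Infinite}) then 1 else 0

theorem IsShuffle.infinite_setOf_iff {X : Type*} {α β γ : ℕ → X} (h : IsShuffle α β γ)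
    (p : X → Prop) :
    {t | p (α t)}.Infinite ↔ {t | p (β t)}.Infinite ∨ {t | p (γ t)}.Infinite := by
  obtain ⟨e, g, he, hg, hcover, -, hβ, hγ⟩ := h
  have hsplit : {t | p (α t)} = e '' {s | p (β s)} ∪ g '' {s | p (γ s)} := by
    ext t
    constructor
    · intro ht
      rcases hcover t with ⟨s, rfl⟩ | ⟨s, rfl⟩
      · exact Or.inl ⟨s, by simpa [hβ] using ht, rfl⟩
      · exact Or.inr ⟨s, by simpa [hγ] using ht, rfl⟩
    · rintro (⟨s, hs, rfl⟩ | ⟨s, hs, rfl⟩)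
      · simpa [hβ] using hs
      · simpa [hγ] using hs
  rw [hsplit, Set.infinite_union, Set.infinite_image_iff he.injective.injOn,
    Set.infinite_image_iff hg.injective.injOn]

theorem nonempty_setOf_infinite_val_fiber {n : ℕ} (δ : ℕ → Fin n) :
    {k : ℕ | {t | (δ t : ℕ) = k}.Infinite}.Nonempty := by
  have : Nonempty (Fin n) := ⟨δ 0⟩
  obtain ⟨y, hy⟩ := Finite.exists_infinite_fiber δ
  refine ⟨y, ?_⟩
  simpa [Set.preimage, Fin.val_inj] using Set.infinite_coe_iff.mp hy

theorem IsShuffle.parity_eq_or {n : ℕ} {α β γ : ℕ → Fin n} (h : IsShuffle α β γ) :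
    parity α = parity β ∨ parity α = parity γ := by
  have hunion : {k : ℕ | {t | (α t : ℕ) = k}.Infinite} =
      {k : ℕ | {t | (β t : ℕ) = k}.Infinite} ∪ {k : ℕ | {t | (γ t : ℕ) = k}.Infinite} := by
    ext k
    exact h.infinite_setOf_iff (fun x : Fin n => (x : ℕ) = k)
  have hmin := csInf_union (OrderBot.bddBelow _) (nonempty_setOf_infinite_val_fiber β)
    (OrderBot.bddBelow _) (nonempty_setOf_infinite_val_fiber γ)
  unfold parity
  rw [hunion, hmin]
  rcases min_choice (sInf {k : ℕ | {t | (β t : ℕ) = k}.Infinite})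
      (sInf {k : ℕ | {t | (γ t : ℕ) = k}.Infinite}) with hmin_eq | hmin_eq
  · exact Or.inl (by rw [hmin_eq])
  · exact Or.inr (by rw [hmin_eq])

/-- The parity aggregation function is submixing. -/
theorem parity_submixing {n : ℕ} (α β γ : ℕ → Fin n) (h : IsShuffle α β γ) :
    min (parity β) (parity γ) ≤ parity α ∧ parity α ≤ max (parity β) (parity γ) := by
  rcases h.parity_eq_or with hα | hα <;> rw [hα]
  · exact ⟨min_le_left _ _, le_max_left _ _⟩
  · exact ⟨min_le_right _ _, le_max_right _ _⟩
end

section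
/- If f is shift-invariant and submixing, then for any n ≥ 1 sequences β_1, ..., β_n and any n-partite shuffle α of them, min_i f(β_i) ≤ f(α) ≤ max_i f(β_i). -/
/-!
Peel off one factor at a time. The positions not occupied by the last sequence form an infinite
set; enumerated increasingly (`Nat.nth`) they carry a partite shuffle of the remaining sequences,
and `α` is a 2-partite shuffle of the last sequence and that one. Submixing therefore keeps
`f α` in every order-connected set containing all `f (β i)`, such as the interval
`[⨅ i, f (β i), ⨆ i, f (β i)]`.
-/

/-- Prepend one element to an infinite sequence. -/
def prepend {X : Type*} (a : X) (α : ℕ → X) : ℕ → X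
  | 0 => a
  | n + 1 => α n

/-- `α` is an `ι`-partite shuffle of the family `β`: ℕ partitions into the
(infinite) ranges of strictly monotone enumerations `e j`, and `α` along
`e j` equals `β j`. -/
def IsPartiteShuffle {ι X : Type*} (α : ℕ → X) (β : ι → ℕ → X) : Prop :=
  ∃ e : ι → ℕ → ℕ, (∀ j, StrictMono (e j)) ∧
    (∀ m, ∃! p : ι × ℕ, e p.1 p.2 = m) ∧
    (∀ j k, α (e j k) = β j k)

namespace IsPartiteShuffle

variable {ι κ X : Type*} {α : ℕ → X} {β : ι → ℕ → X}

theorem exists_bijective (h : IsPartiteShuffle α β) :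
    ∃ e : ι → ℕ → ℕ, (∀ j, StrictMono (e j)) ∧ Function.Bijective (Function.uncurry e) ∧
      ∀ j k, α (e j k) = β j k := by
  obtain ⟨e, hmono, huniq, hval⟩ := h
  exact ⟨e, hmono, (Function.bijective_iff_existsUnique _).2 huniq, hval⟩

theorem of_bijective (e : ι → ℕ → ℕ) (hmono : ∀ j, StrictMono (e j))
    (hbij : Function.Bijective (Function.uncurry e)) (hval : ∀ j k, α (e j k) = β j k) :
    IsPartiteShuffle α β :=
  ⟨e, hmono, (Function.bijective_iff_existsUnique _).1 hbij, hval⟩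

theorem comp_equiv (h : IsPartiteShuffle α β) (σ : κ ≃ ι) : IsPartiteShuffle α (β ∘ σ) := by
  obtain ⟨e, hmono, hbij, hval⟩ := h.exists_bijective
  refine of_bijective (e ∘ σ) (fun j => hmono (σ j)) ?_ fun j k => hval (σ j) k
  exact hbij.comp (σ.prodCongr (Equiv.refl ℕ)).bijective

theorem not_isEmpty (h : IsPartiteShuffle α β) : ¬IsEmpty ι := by
  obtain ⟨e, -, hbij, -⟩ := h.exists_bijective
  obtain ⟨⟨j, -⟩, -⟩ := hbij.surjective 0
  exact fun hι => hι.false j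

theorem eq_of_subsingleton [Subsingleton ι] (h : IsPartiteShuffle α β) (i : ι) : α = β i := by
  obtain ⟨e, hmono, hbij, hval⟩ := h.exists_bijective
  have hsurj : Function.Surjective (e i) := fun m => by
    obtain ⟨⟨j, k⟩, hjk⟩ := hbij.surjective m
    exact ⟨k, Subsingleton.elim i j ▸ hjk⟩
  -- the only order automorphism of `ℕ` is the identity
  have hid : e i = id :=
    congrArg DFunLike.coe (Subsingleton.elim ((hmono i).orderIsoOfSurjective _ hsurj) (.refl ℕ))
  funext m
  simpa [hid] using hval i m

end IsPartiteShuffle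

section Subsequence

variable {ι X : Type*} {P : ℕ → Prop}

theorem isShuffle_comp_nth (α : ℕ → X) {e : ℕ → ℕ} (he : StrictMono e) (hP : {m | P m}.Infinite)
    (hcover : ∀ m, ¬P m → ∃ k, e k = m) (he_not : ∀ k, ¬P (e k)) :
    IsShuffle α (α ∘ e) (α ∘ Nat.nth P) := by
  classical
  refine ⟨e, Nat.nth P, he, Nat.nth_strictMono hP, fun m => ?_, fun k l hkl => ?_,
    fun _ => rfl, fun _ => rfl⟩
  · by_cases hm : P m
    · exact .inr ⟨Nat.count P m, Nat.nth_count hm⟩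
    · exact .inl (hcover m hm)
  · exact he_not k (hkl ▸ Nat.nth_mem_of_infinite hP l)

theorem isPartiteShuffle_comp_nth [DecidablePred P] {α : ℕ → X} {β : ι → ℕ → X} (hP : {m | P m}.Infinite)
    (e : ι → ℕ → ℕ) (hmono : ∀ j, StrictMono (e j)) (hmem : ∀ j k, P (e j k))
    (hinj : Function.Injective (Function.uncurry e)) (hsurj : ∀ m, P m → ∃ j k, e j k = m)
    (hval : ∀ j k, α (e j k) = β j k) :
    IsPartiteShuffle (α ∘ Nat.nth P) β := by
  refine .of_bijective (fun j k => Nat.count P (e j k))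
    (fun j _ _ hkl => Nat.count_strict_mono (hmem j _) (hmono j hkl)) ⟨?_, fun m => ?_⟩
    fun j k => by simp only [Function.comp_apply, Nat.nth_count (hmem j k), hval]
  · rintro ⟨j, k⟩ ⟨j', k'⟩ h
    apply hinj
    simpa only [Function.uncurry_apply_pair, Nat.nth_count (hmem _ _)] using
      congrArg (Nat.nth P) h
  · obtain ⟨j, k, hjk⟩ := hsurj _ (Nat.nth_mem_of_infinite hP m)
    exact ⟨(j, k), by simp [hjk, Nat.count_nth_of_infinite hP]⟩

end Subsequence

namespace IsPartiteShuffle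

variable {κ X : Type*} {α : ℕ → X}

theorem exists_isShuffle_some [Nonempty κ] {β : Option κ → ℕ → X} (h : IsPartiteShuffle α β) :
    ∃ γ, IsShuffle α (β none) γ ∧ IsPartiteShuffle γ (β ∘ some) := by
  classical
  obtain ⟨e, hmono, hbij, hval⟩ := h.exists_bijective
  set P : ℕ → Prop := fun m => ∃ j k, e (some j) k = m
  have hP : {m | P m}.Infinite := by
    obtain ⟨j⟩ := ‹Nonempty κ›
    refine (Set.infinite_range_of_injective (hmono (some j)).injective).mono ?_
    rintro m ⟨k, hk⟩
    exact ⟨j, k, hk⟩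
  refine ⟨α ∘ Nat.nth P, ?_, ?_⟩
  · have hβ : α ∘ e none = β none := funext (hval none)
    refine hβ ▸ isShuffle_comp_nth α (hmono none) hP (fun m hm => ?_) fun k ⟨j, l, hjl⟩ => ?_
    · obtain ⟨⟨j, k⟩, hjk⟩ := hbij.surjective m
      cases j with
      | none => exact ⟨k, hjk⟩
      | some j => exact absurd ⟨j, k, hjk⟩ hm
    · exact Option.some_ne_none j (congrArg Prod.fst (hbij.injective hjl : (some j, l) = (none, k)))
  · refine isPartiteShuffle_comp_nth hP (e ∘ some) (fun j => hmono (some j))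
      (fun j k => ⟨j, k, rfl⟩) ?_ (fun m hm => hm) fun j k => hval (some j) k
    exact hbij.injective.comp (Function.Injective.prodMap (Option.some_injective κ) Function.injective_id)

end IsPartiteShuffle

theorem IsPartiteShuffle.apply_mem_of_ordConnected {ι X Y : Type*} [Finite ι] [LinearOrder Y]
    {f : (ℕ → X) → Y}
    (hsub : ∀ α β γ : ℕ → X, IsShuffle α β γ → min (f β) (f γ) ≤ f α ∧ f α ≤ max (f β) (f γ))
    {s : Set Y} (hs : s.OrdConnected) {α : ℕ → X} {β : ι → ℕ → X}
    (h : IsPartiteShuffle α β) (hβ : ∀ i, f (β i) ∈ s) : f α ∈ s := by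
  have shuffle_mem {α β γ : ℕ → X} (h : IsShuffle α β γ) (hβ : f β ∈ s) (hγ : f γ ∈ s) :
      f α ∈ s :=
    hs.out (min_rec' (· ∈ s) hβ hγ) (max_rec' (· ∈ s) hβ hγ) (hsub α β γ h)
  induction ι using Finite.induction_empty_option generalizing α with
  | of_equiv σ ih =>
    exact ih (h.comp_equiv σ) fun i => hβ (σ i)
  | h_empty => exact (h.not_isEmpty inferInstance).elim
  | @h_option κ _ ih =>
    rcases isEmpty_or_nonempty κ with hκ | hκ
    · exact h.eq_of_subsingleton none ▸ hβ none
    · obtain ⟨γ, hshuffle, hγ⟩ := h.exists_isShuffle_some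
      exact shuffle_mem hshuffle (hβ none) (ih hγ fun i => hβ (some i))

theorem nPartite_submixing_general (f : (ℕ → ℤ) → ℝ)
    (hsub : ∀ α β γ : ℕ → ℤ, IsShuffle α β γ →
      min (f β) (f γ) ≤ f α ∧ f α ≤ max (f β) (f γ))
    (n : ℕ) (β : Fin n → ℕ → ℤ) (α : ℕ → ℤ)
    (h : IsPartiteShuffle α β) :
    (⨅ i, f (β i)) ≤ f α ∧ f α ≤ ⨆ i, f (β i) :=
  h.apply_mem_of_ordConnected hsub Set.ordConnected_Icc fun i =>
    ⟨ciInf_le (Set.finite_range _).bddBelow i, le_ciSup (f := fun i => f (β i)) (Set.finite_range _).bddAbove i⟩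

/-- For a shift-invariant submixing function, the value of an `n`-partite
shuffle lies between the min and the max of the values of its factors. -/
theorem nPartite_submixing (f : (ℕ → ℤ) → ℝ)
    (hshift : ∀ (a : ℤ) (σ : ℕ → ℤ), f (prepend a σ) = f σ)
    (hsub : ∀ α β γ : ℕ → ℤ, IsShuffle α β γ →
      min (f β) (f γ) ≤ f α ∧ f α ≤ max (f β) (f γ))
    (n : ℕ) (hn : 1 ≤ n) (β : Fin n → ℕ → ℤ) (α : ℕ → ℤ)
    (h : IsPartiteShuffle α β) :
    (⨅ i, f (β i)) ≤ f α ∧ f α ≤ ⨆ i, f (β i) :=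
  nPartite_submixing_general f hsub n β α h
end

section
/- If f : (ℕ → ℤ) → ℝ is shift-invariant and submixing, α : ℕ → ℤ, and there are finitely many sequences β_1,...,β_n each with f(β_i) = w such that some suffix of α is an n-partite shuffle of suffixes of the β_i, then f(α) = w. -/
/-- The suffix of a sequence starting at index `ℓ`. -/
def suffix {X : Type*} (σ : ℕ → X) (ℓ : ℕ) : ℕ → X := fun t => σ (ℓ + t)

/-!
A suffix of `α` has the same value as `α`, and likewise for the `β i`, because a suffix is undone
by finitely many prepends. An `(n + 2)`-partite shuffle is a 2-partite shuffle of its last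
component with the subsequence carried by the other `n + 1` components, itself an
`(n + 1)`-partite shuffle of them; submixing squeezes the value of a shuffle of two sequences of
value `w` to `w`, so induction on `n` gives the claim.
-/

open Function Set

section Suffix

variable {X : Type*}

theorem suffix_zero (σ : ℕ → X) : suffix σ 0 = σ :=
  funext fun t => congrArg σ (Nat.zero_add t)

theorem prepend_suffix_succ (σ : ℕ → X) (ℓ : ℕ) :
    prepend (σ ℓ) (suffix σ (ℓ + 1)) = suffix σ ℓ := by
  funext t
  cases t with
  | zero => rfl
  | succ t => simp only [prepend, suffix]; rw [Nat.add_right_comm, Nat.add_assoc]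

theorem apply_suffix_of_prepend_invariant {Y : Type*} {f : (ℕ → X) → Y}
    (hf : ∀ a σ, f (prepend a σ) = f σ) (σ : ℕ → X) (ℓ : ℕ) : f (suffix σ ℓ) = f σ := by
  induction ℓ with
  | zero => rw [suffix_zero]
  | succ ℓ ih => rw [← hf (σ ℓ), prepend_suffix_succ, ih]

end Suffix

theorem Fin.range_castSucc_eq_compl_last (n : ℕ) :
    range (Fin.castSucc : Fin n → Fin (n + 1)) = {Fin.last n}ᶜ := by
  ext i
  simp [Fin.range_castSucc, Fin.ext_iff, Fin.val_last, i.is_le.lt_iff_ne]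

theorem Set.infinite_iUnion_range {ι α : Type*} [Nonempty ι] [Infinite α] {g : ι → α → α}
    (hg : ∀ j, Injective (g j)) : (⋃ j, range (g j)).Infinite :=
  (infinite_range_of_injective (hg (Classical.arbitrary ι))).mono (subset_iUnion _ _)

namespace IsPartiteShuffle

variable {ι κ X : Type*} {α : ℕ → X} {β : ι → ℕ → X}

theorem nonempty_index (h : IsPartiteShuffle α β) : Nonempty ι :=
  let ⟨_, _, hcov, _⟩ := h
  let ⟨p, _⟩ := hcov 0
  ⟨p.1⟩

theorem eq_of_unique [Unique ι] (h : IsPartiteShuffle α β) : α = β default := by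
  obtain ⟨e, he, hcov, hα⟩ := h
  have hsurj : Surjective (e default) := fun m =>
    let ⟨⟨j, k⟩, hjk, _⟩ := hcov m
    ⟨k, by rwa [Unique.eq_default j] at hjk⟩
  have hid : e default = id :=
    ((he default).range_inj strictMono_id).1 (by rw [hsurj.range_eq, range_id])
  funext k
  simpa [hid] using hα default k

theorem comp_nth (e : ι → ℕ → ℕ) (he : ∀ j, StrictMono (e j)) (he_inj : Injective (uncurry e))
    (hα : ∀ j k, α (e j k) = β j k) {φ : κ → ι} (hφ : Injective φ) [Nonempty κ] :
    IsPartiteShuffle (α ∘ Nat.nth (· ∈ ⋃ j, range (e (φ j)))) (β ∘ φ) := by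
  classical
  set S := ⋃ j, range (e (φ j))
  have hS : S.Infinite := infinite_iUnion_range fun j => (he (φ j)).injective
  have hmem : ∀ j k, e (φ j) k ∈ S := fun j k => mem_iUnion_of_mem j (mem_range_self k)
  refine ⟨fun j k => Nat.count (· ∈ S) (e (φ j) k),
    fun j a b hab => Nat.count_strict_mono (hmem j a) (he _ hab), ?_, ?_⟩
  · refine (bijective_iff_existsUnique _).1 ⟨?_, ?_⟩
    · rintro ⟨j, k⟩ ⟨j', k'⟩ hjk
      have hpos := Nat.count_injective (hmem j k) (hmem j' k') hjk
      obtain ⟨hj, rfl⟩ := Prod.ext_iff.1 (he_inj (a₁ := (φ j, k)) (a₂ := (φ j', k')) hpos)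
      rw [hφ hj]
    · intro m
      obtain ⟨j, k, hk⟩ := mem_iUnion.1 (Nat.nth_mem_of_infinite hS m)
      refine ⟨(j, k), ?_⟩
      change Nat.count (· ∈ S) (e (φ j) k) = m
      rw [hk]
      exact Nat.count_nth_of_infinite (p := (· ∈ S)) hS m
  · intro j k
    simp only [comp_apply, Nat.nth_count (hmem j k), hα]

theorem exists_isShuffle {i₀ : ι} {φ : κ → ι} (hφ : Injective φ) (hφ_range : range φ = {i₀}ᶜ)
    [Nonempty κ] (h : IsPartiteShuffle α β) :
    ∃ γ, IsShuffle α (β i₀) γ ∧ IsPartiteShuffle γ (β ∘ φ) := by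
  obtain ⟨e, he, hcov, hα⟩ := h
  have hbij : Bijective (uncurry e) := (bijective_iff_existsUnique _).2 hcov
  set S := ⋃ j, range (e (φ j))
  have hS : S.Infinite := infinite_iUnion_range fun j => (he (φ j)).injective
  refine ⟨_, ⟨e i₀, Nat.nth (· ∈ S), he i₀, Nat.nth_strictMono hS, ?_, ?_, hα i₀, fun _ => rfl⟩,
    comp_nth e he hbij.1 hα hφ⟩
  · intro m
    obtain ⟨⟨j, k⟩, rfl⟩ := hbij.2 m
    by_cases hj : j = i₀
    · exact .inl ⟨k, by rw [hj]; rfl⟩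
    · obtain ⟨j', rfl⟩ : j ∈ range φ := hφ_range ▸ hj
      refine .inr (?_ : e (φ j') k ∈ range (Nat.nth (· ∈ S)))
      rw [Nat.range_nth_of_infinite (p := (· ∈ S)) hS, ofPred_mem_eq]
      exact mem_iUnion_of_mem j' (mem_range_self k)
  · intro k l hkl
    obtain ⟨j, k', hjk'⟩ := mem_iUnion.1 (Nat.nth_mem_of_infinite hS l)
    have hi₀ : i₀ = φ j :=
      congrArg Prod.fst (hbij.1 (a₁ := (i₀, k)) (a₂ := (φ j, k')) (hkl.trans hjk'.symm))
    exact (hφ_range ▸ mem_range_self j : φ j ∈ ({i₀}ᶜ : Set ι)) hi₀.symm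

end IsPartiteShuffle

def IsSubmixing {X R : Type*} [LinearOrder R] (f : (ℕ → X) → R) : Prop :=
  ∀ α β γ : ℕ → X, IsShuffle α β γ → min (f β) (f γ) ≤ f α ∧ f α ≤ max (f β) (f γ)

namespace IsSubmixing

variable {X R : Type*} [LinearOrder R] {f : (ℕ → X) → R}

theorem apply_eq_of_isShuffle (hf : IsSubmixing f) {α β γ : ℕ → X} {w : R}
    (h : IsShuffle α β γ) (hβ : f β = w) (hγ : f γ = w) : f α = w := by
  have := hf α β γ h
  rw [hβ, hγ, min_self, max_self] at this
  exact le_antisymm this.2 this.1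

theorem apply_eq_of_isPartiteShuffle (hf : IsSubmixing f) {n : ℕ} {α : ℕ → X} {β : Fin (n + 1) → ℕ → X} {w : R}
    (hβ : ∀ i, f (β i) = w) (h : IsPartiteShuffle α β) : f α = w := by
  induction n generalizing α with
  | zero => rw [h.eq_of_unique (ι := Fin 1), hβ]
  | succ n ih =>
    obtain ⟨γ, hαγ, hγ⟩ :=
      h.exists_isShuffle (Fin.castSucc_injective _) (Fin.range_castSucc_eq_compl_last _)
    exact hf.apply_eq_of_isShuffle hαγ (hβ _) (ih (fun i => hβ _) hγ)

end IsSubmixing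

theorem payoff_transfer_general (f : (ℕ → ℤ) → ℝ)
    (hshift : ∀ (a : ℤ) (σ : ℕ → ℤ), f (prepend a σ) = f σ)
    (hsub : ∀ α β γ : ℕ → ℤ, IsShuffle α β γ →
      min (f β) (f γ) ≤ f α ∧ f α ≤ max (f β) (f γ))
    (n : ℕ) (β : Fin n → ℕ → ℤ) (w : ℝ)
    (hβ : ∀ i, f (β i) = w) (α : ℕ → ℤ) (ℓ : ℕ) (ℓs : Fin n → ℕ)
    (h : IsPartiteShuffle (suffix α ℓ) (fun i => suffix (β i) (ℓs i))) :
    f α = w := by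
  obtain ⟨m, rfl⟩ : ∃ m, n = m + 1 :=
    Nat.exists_eq_succ_of_ne_zero (Fin.pos_iff_nonempty.2 h.nonempty_index).ne'
  rw [← apply_suffix_of_prepend_invariant hshift α ℓ]
  exact IsSubmixing.apply_eq_of_isPartiteShuffle hsub
    (fun i => (apply_suffix_of_prepend_invariant hshift _ _).trans (hβ i)) h

/-- Payoff-transfer lemma: if some suffix of `α` is an `n`-partite shuffle of
suffixes of sequences all of value `w` under a shift-invariant submixing `f`,
then `f α = w`. -/
theorem payoff_transfer (f : (ℕ → ℤ) → ℝ)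
    (hshift : ∀ (a : ℤ) (σ : ℕ → ℤ), f (prepend a σ) = f σ)
    (hsub : ∀ α β γ : ℕ → ℤ, IsShuffle α β γ →
      min (f β) (f γ) ≤ f α ∧ f α ≤ max (f β) (f γ))
    (n : ℕ) (hn : 1 ≤ n) (β : Fin n → ℕ → ℤ) (w : ℝ)
    (hβ : ∀ i, f (β i) = w) (α : ℕ → ℤ) (ℓ : ℕ) (ℓs : Fin n → ℕ)
    (h : IsPartiteShuffle (suffix α ℓ) (fun i => suffix (β i) (ℓs i))) :
    f α = w :=
  payoff_transfer_general f hshift hsub n β w hβ α ℓ ℓs h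
end

section
/- If α is a shuffle of β and γ and all three sequences take values in [-M, M], then every Cesàro average of α is a convex combination of Cesàro averages (of some prefix lengths) of β and γ, up to an error of at most 2M/t; consequently limsup of Cesàro averages of α is at most max of the limsups for β and γ. -/
/-!
Since `e` and `g` are increasing, the positions below `t` are `e 0, …, e (p - 1)` and
`g 0, …, g (q - 1)` with `p + q = t`, so `t A_t(α) = p A_p(β) + q A_q(γ)`. Both `p` and `q`
tend to infinity, so for any `c` above both limsups, eventually `A_p(β), A_q(γ) < c`, and then the
convex combination `A_t(α)` is at most `c` as well.
-/

open scoped Classical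
open Finset Filter

/-- Cesàro average of the first `t` entries of a sequence (0 for `t = 0`). -/
noncomputable def cesaro (σ : ℕ → ℤ) (t : ℕ) : ℝ :=
  (∑ r ∈ Finset.range t, (σ r : ℝ)) / t

namespace StrictMono

variable {e : ℕ → ℕ}

-- `m` is the first index with `t ≤ e m`.
theorem exists_filter_range_eq_image (he : StrictMono e) (t : ℕ) :
    ∃ m, (range t).filter (fun i => ∃ k, e k = i) = (range m).image e := by
  have hex : ∃ m, t ≤ e m := ⟨t, he.id_le t⟩
  refine ⟨Nat.find hex, ?_⟩
  ext i
  simp only [mem_filter, mem_range, mem_image, Nat.lt_find_iff, not_le]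
  constructor
  · rintro ⟨hi, k, rfl⟩
    exact ⟨k, fun j hj => (he.monotone hj).trans_lt hi, rfl⟩
  · rintro ⟨k, hk, rfl⟩
    exact ⟨hk k le_rfl, k, rfl⟩

theorem sum_filter_range_eq_sum_range {R : Type*} [AddCommMonoid R] (he : StrictMono e)
    (f : ℕ → R) (t : ℕ) :
    ∑ i ∈ (range t).filter (fun i => ∃ k, e k = i), f i =
      ∑ k ∈ range ((range t).filter fun i => ∃ k, e k = i).card, f (e k) := by
  obtain ⟨m, hm⟩ := he.exists_filter_range_eq_image t
  rw [hm, card_image_of_injective _ he.injective, card_range,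
    sum_image he.injective.injOn]

theorem tendsto_card_filter_range (he : StrictMono e) :
    Tendsto (fun t => ((range t).filter fun i => ∃ k, e k = i).card) atTop atTop := by
  refine tendsto_atTop_atTop.2 fun N => ⟨e N, fun t ht => ?_⟩
  have hsub : (range N).image e ⊆ (range t).filter fun i => ∃ k, e k = i := by
    intro i hi
    obtain ⟨k, hk, rfl⟩ := mem_image.1 hi
    exact mem_filter.2 ⟨mem_range.2 ((he (mem_range.1 hk)).trans_le ht), k, rfl⟩
  simpa [card_image_of_injective _ he.injective] using card_le_card hsub

end StrictMono

theorem abs_cesaro_le {σ : ℕ → ℤ} {M : ℤ} (h : ∀ r, |σ r| ≤ M) (t : ℕ) :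
    |cesaro σ t| ≤ M := by
  have hsum : |∑ r ∈ range t, (σ r : ℝ)| ≤ M * t :=
    calc |∑ r ∈ range t, (σ r : ℝ)| ≤ ∑ r ∈ range t, |(σ r : ℝ)| := abs_sum_le_sum_abs _ _
      _ ≤ ∑ _r ∈ range t, (M : ℝ) := sum_le_sum fun r _ => by exact_mod_cast h r
      _ = M * t := by simp [mul_comm]
  have hM : (0 : ℝ) ≤ M := by exact_mod_cast (abs_nonneg _).trans (h 0)
  rw [cesaro, abs_div, Nat.abs_cast]
  exact div_le_of_le_mul₀ t.cast_nonneg hM hsum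

theorem div_mul_cesaro (σ : ℕ → ℤ) (p t : ℕ) :
    (p : ℝ) / t * cesaro σ p = (∑ k ∈ range p, (σ k : ℝ)) / t := by
  rcases eq_or_ne p 0 with rfl | hp
  · simp
  · rw [cesaro]
    field_simp

theorem limsup_le_max_of_eventually_eq_convex_comb {ι κ : Type*} {l : Filter ι} {f : Filter κ}
    {a u v : ι → ℝ} {x y : κ → ℝ} {p q : ι → κ} (hp : Tendsto p l f) (hq : Tendsto q l f)
    (hx : IsBoundedUnder (· ≤ ·) f x) (hy : IsBoundedUnder (· ≤ ·) f y)
    (ha : IsCoboundedUnder (· ≤ ·) l a) (hu : ∀ᶠ i in l, 0 ≤ u i) (hv : ∀ᶠ i in l, 0 ≤ v i)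
    (huv : ∀ᶠ i in l, u i + v i = 1) (hconv : ∀ᶠ i in l, a i = u i * x (p i) + v i * y (q i)) :
    limsup a l ≤ max (limsup x f) (limsup y f) := by
  refine le_of_forall_gt_imp_ge_of_dense fun c hc => limsup_le_of_le ha ?_
  have hxc := hp.eventually (eventually_lt_of_limsup_lt ((le_max_left _ _).trans_lt hc) hx)
  have hyc := hq.eventually (eventually_lt_of_limsup_lt ((le_max_right _ _).trans_lt hc) hy)
  filter_upwards [hu, hv, huv, hconv, hxc, hyc] with i hui hvi huvi hai hxi hyi
  calc a i = u i * x (p i) + v i * y (q i) := hai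
    _ ≤ u i * c + v i * c := by gcongr
    _ = c := by rw [← add_mul, huvi, one_mul]

/-- A Cesàro average of a shuffle is a convex combination of Cesàro averages
of its factors; consequently the limsup of Cesàro averages of the shuffle is
at most the max of the limsups of its factors. -/
theorem shuffle_cesaro (α β γ : ℕ → ℤ) (M : ℤ)
    (hα : ∀ t, |α t| ≤ M) (hβ : ∀ t, |β t| ≤ M) (hγ : ∀ t, |γ t| ≤ M)
    (e g : ℕ → ℕ) (he : StrictMono e) (hg : StrictMono g)
    (hcover : ∀ n, (∃ k, e k = n) ∨ (∃ k, g k = n))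
    (hdisj : ∀ k l, e k ≠ g l)
    (hβe : ∀ k, α (e k) = β k) (hγg : ∀ k, α (g k) = γ k) :
    (∀ t, 1 ≤ t →
      cesaro α t =
        (((((Finset.range t).filter fun i => ∃ k, e k = i).card : ℕ) : ℝ) / t) *
          cesaro β ((Finset.range t).filter fun i => ∃ k, e k = i).card +
        (((((Finset.range t).filter fun i => ∃ k, g k = i).card : ℕ) : ℝ) / t) *
          cesaro γ ((Finset.range t).filter fun i => ∃ k, g k = i).card) ∧
    Filter.limsup (cesaro α) Filter.atTop ≤
      max (Filter.limsup (cesaro β) Filter.atTop)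
          (Filter.limsup (cesaro γ) Filter.atTop) := by
  have hcompl (t : ℕ) : (range t).filter (fun i => ∃ k, g k = i) =
      (range t).filter (fun i => ¬∃ k, e k = i) :=
    filter_congr fun i _ => ⟨fun ⟨l, hl⟩ ⟨k, hk⟩ => hdisj k l (hk.trans hl.symm),
      (hcover i).resolve_left⟩
  have hcard (t : ℕ) : ((range t).filter fun i => ∃ k, e k = i).card +
      ((range t).filter fun i => ∃ k, g k = i).card = t := by
    rw [hcompl, card_filter_add_card_filter_not, card_range]
  have hsplit (t : ℕ) : cesaro α t =
      (((range t).filter fun i => ∃ k, e k = i).card : ℝ) / t *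
          cesaro β ((range t).filter fun i => ∃ k, e k = i).card +
        (((range t).filter fun i => ∃ k, g k = i).card : ℝ) / t *
          cesaro γ ((range t).filter fun i => ∃ k, g k = i).card := by
    rw [div_mul_cesaro, div_mul_cesaro, ← add_div, cesaro, ← sum_filter_add_sum_filter_not _
      (fun i => ∃ k, e k = i), ← hcompl]
    simp only [he.sum_filter_range_eq_sum_range, hg.sum_filter_range_eq_sum_range, hβe, hγg]
  refine ⟨fun t _ => hsplit t, ?_⟩
  refine limsup_le_max_of_eventually_eq_convex_comb he.tendsto_card_filter_range
    hg.tendsto_card_filter_range (isBoundedUnder_of ⟨M, fun t => (abs_le.1 (abs_cesaro_le hβ t)).2⟩)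
    (isBoundedUnder_of ⟨M, fun t => (abs_le.1 (abs_cesaro_le hγ t)).2⟩)
    (isCoboundedUnder_le_of_le atTop fun t => (abs_le.1 (abs_cesaro_le hα t)).1)
    (.of_forall fun t => by positivity) (.of_forall fun t => by positivity) ?_
    (.of_forall hsplit)
  filter_upwards [eventually_ne_atTop 0] with t ht
  rw [← add_div, ← Nat.cast_add, hcard, div_self (Nat.cast_ne_zero.2 ht)]
end
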